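/- Fix an atom v of 𝓛ₙ. Let A₁ and A₂ be MR-subalgebras of 𝓛ₙ, let αᵢ be a minimal element of Aᵢ, and set Bᵢ = β_v[Aᵢ], aᵢ = min Bᵢ, and cᵢ = v ∨ αᵢ. Then A₁ ⊆ A₂ if and only if B₁ ⊆ B₂ and c₁ +_{a₁} c₂ ∈ B₂. -/

import Mathlib

/-!
Let `α` be a minimal element of an MR-subalgebra `A`. For `x ∈ A` the caret `α ∘ (-x)` lies
in `A` below `α`, so it equals `α`, i.e. `supp x ⊆ supp α`. Such an `x` is `α` restricted to
`supp x` with the signs flipped on the set `sep x α` where `x` and `α` disagree, and the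
restriction of `α` to any support of `A` again lies in `A`. Hence `A` consists of exactly the
faces `x` with `supp x ⊆ supp α` for which `supp x` and `sep x α` are supports of elements of
`A`; and the supports of `A` are closed under differences.

For an atom `v`, `β_v x` is `v` restricted to `supp x`, so `β_v[A]` records exactly the supports
of `A`, its minimum is `β_v α`, and `c₁ +_{a₁} c₂` is the restriction of `v` to
`supp α₁ \ sep α₁ α₂`. Both sides of the equivalence therefore say that every support of `A₁`
is one of `A₂` and that `α₁ ∈ A₂`.
-/


@[ext] structure Cube (n : ℕ) where
  pos : Finset (Fin n)
  neg : Finset (Fin n)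
  disj : Disjoint pos neg

namespace Cube
variable {n : ℕ}

instance : PartialOrder (Cube n) where
  le x y := y.pos ⊆ x.pos ∧ y.neg ⊆ x.neg
  le_refl x := ⟨subset_rfl, subset_rfl⟩
  le_trans x y z h₁ h₂ := ⟨h₂.1.trans h₁.1, h₂.2.trans h₁.2⟩
  le_antisymm x y h₁ h₂ :=
    Cube.ext (subset_antisymm h₂.1 h₁.1) (subset_antisymm h₂.2 h₁.2)

instance : OrderTop (Cube n) where
  top := ⟨∅, ∅, by simp⟩
  le_top x := ⟨Finset.empty_subset _, Finset.empty_subset _⟩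

instance : SemilatticeSup (Cube n) where
  sup x y := ⟨x.pos ∩ y.pos, x.neg ∩ y.neg,
    x.disj.mono Finset.inter_subset_left Finset.inter_subset_left⟩
  le_sup_left x y := ⟨Finset.inter_subset_left, Finset.inter_subset_left⟩
  le_sup_right x y := ⟨Finset.inter_subset_right, Finset.inter_subset_right⟩
  sup_le x y z hx hy := ⟨Finset.subset_inter hx.1 hy.1, Finset.subset_inter hx.2 hy.2⟩

/-- The reflection `Δ(x, y)` of `y` through the centre of `x`. -/
def delta (x y : Cube n) : Cube n :=
  ⟨x.pos ∪ (y.neg \ x.neg), x.neg ∪ (y.pos \ x.pos), by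
    simp only [Finset.disjoint_union_left, Finset.disjoint_union_right]
    refine ⟨⟨x.disj, Finset.sdiff_disjoint⟩, Finset.disjoint_sdiff, ?_⟩
    exact y.disj.symm.mono Finset.sdiff_subset Finset.sdiff_subset⟩

lemma delta_le (x y : Cube n) : delta x y ≤ x :=
  ⟨Finset.subset_union_left, Finset.subset_union_left⟩

/-- The co-rank of a face of the `n`-cube. -/
def corank (x : Cube n) : ℕ := (x.pos ∪ x.neg).card

/-- The set of coatoms of `𝓛ₙ` lying above `a`. -/
def coatomsAbove (a : Cube n) : Set (Cube n) := {c | corank c = 1 ∧ a ≤ c}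

/-- `A` is an MR-subalgebra of `𝓛ₙ`. -/
def IsMRSub (A : Set (Cube n)) : Prop :=
  ⊤ ∈ A ∧ (∀ x ∈ A, ∀ y ∈ A, x ⊔ y ∈ A) ∧
    (∀ x ∈ A, ∀ y ∈ A, y ≤ x → delta x y ∈ A) ∧
    (∀ x ∈ A, ∀ y ∈ A, ∃ m ∈ A, IsGLB {x, delta (x ⊔ y) y} m)

/-- The coatoms of a subalgebra `A`: maximal elements of `A \ {⊤}`. -/
def coAt (A : Set (Cube n)) : Set (Cube n) :=
  {a | a ∈ A ∧ a ≠ ⊤ ∧ ∀ b ∈ A, b ≠ ⊤ → a ≤ b → b = a}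

/-- The coatoms `a` of `A` with `|𝒞ₐ| = i`. -/
def typeSet (A : Set (Cube n)) (i : ℕ) : Set (Cube n) :=
  {a | a ∈ coAt A ∧ (coatomsAbove a).ncard = i}

/-- An order automorphism of `𝓛ₙ` is a cubic automorphism when it preserves `Δ`. -/
def IsAut (φ : Cube n ≃o Cube n) : Prop :=
  ∀ x y : Cube n, y ≤ x → φ (delta x y) = delta (φ x) (φ y)

/-- The set of automorphisms of `𝓛ₙ`. -/
def AutSet (n : ℕ) : Set (Cube n ≃o Cube n) := {φ | IsAut φ}

/-- An automorphism of the subposet `A` preserving `Δ`. -/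
def IsSubAut {A : Set (Cube n)} (ψ : A ≃o A) : Prop :=
  ∀ (x y : A), (y : Cube n) ≤ (x : Cube n) → ∀ h : delta ↑x ↑y ∈ A,
    (ψ ⟨delta ↑x ↑y, h⟩ : Cube n) = delta ↑(ψ x) ↑(ψ y)

end Cube


open scoped symmDiff

namespace Cube

/-- `bsum x c d` is the symmetric difference `c +ₓ d` of `c ∨ x` and `d ∨ x`
computed in the Boolean lattice `[x, 𝟙]`. -/
def bsum {n : ℕ} (x c d : Cube n) : Cube n :=
  ⟨x.pos \ ((c.pos ∩ x.pos) ∆ (d.pos ∩ x.pos)),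
   x.neg \ ((c.neg ∩ x.neg) ∆ (d.neg ∩ x.neg)),
   x.disj.mono Finset.sdiff_subset Finset.sdiff_subset⟩

end Cube

namespace Cube

/-- `β_v(x) = (x ∨ v) ∧ (Δ(𝟙,x) ∨ v)`, computed explicitly in `𝓛ₙ`. -/
def betav {n : ℕ} (v x : Cube n) : Cube n :=
  ⟨(x.pos ∪ x.neg) ∩ v.pos, (x.pos ∪ x.neg) ∩ v.neg,
   v.disj.mono Finset.inter_subset_right Finset.inter_subset_right⟩

end Cube

namespace Cube
variable {n : ℕ}

lemma le_iff_subset {x y : Cube n} : x ≤ y ↔ y.pos ⊆ x.pos ∧ y.neg ⊆ x.neg := Iff.rfl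

@[simp] lemma sup_pos (x y : Cube n) : (x ⊔ y).pos = x.pos ∩ y.pos := rfl
@[simp] lemma sup_neg (x y : Cube n) : (x ⊔ y).neg = x.neg ∩ y.neg := rfl
@[simp] lemma top_pos : (⊤ : Cube n).pos = ∅ := rfl
@[simp] lemma top_neg : (⊤ : Cube n).neg = ∅ := rfl

lemma notMem_neg_of_mem_pos (x : Cube n) {i : Fin n} (h : i ∈ x.pos) : i ∉ x.neg :=
  Finset.disjoint_left.1 x.disj h

def supp (x : Cube n) : Finset (Fin n) := x.pos ∪ x.neg

lemma supp_subset_of_le {x y : Cube n} (h : x ≤ y) : y.supp ⊆ x.supp :=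
  Finset.union_subset_union h.1 h.2

@[simps]
def opp (x : Cube n) : Cube n := ⟨x.neg, x.pos, x.disj.symm⟩

@[simp] lemma opp_opp (x : Cube n) : x.opp.opp = x := rfl

lemma supp_opp (x : Cube n) : x.opp.supp = x.supp := Finset.union_comm _ _

@[simps]
def comp (x y : Cube n) : Cube n :=
  ⟨x.pos ∪ (y.pos \ x.supp), x.neg ∪ (y.neg \ x.supp), by
    rw [Finset.disjoint_left]
    grind [supp, notMem_neg_of_mem_pos]⟩

@[simp] lemma top_comp (x : Cube n) : (⊤ : Cube n).comp x = x := by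
  ext i <;> simp [supp]

lemma comp_le (x y : Cube n) : x.comp y ≤ x :=
  ⟨Finset.subset_union_left, Finset.subset_union_left⟩

lemma supp_comp (x y : Cube n) : (x.comp y).supp = x.supp ∪ y.supp := by
  ext i; grind [supp, comp_pos, comp_neg]

@[simps]
def restrict (x : Cube n) (K : Finset (Fin n)) : Cube n :=
  ⟨x.pos ∩ K, x.neg ∩ K, x.disj.mono Finset.inter_subset_left Finset.inter_subset_left⟩

lemma supp_restrict (x : Cube n) (K : Finset (Fin n)) : (x.restrict K).supp = x.supp ∩ K :=
  (Finset.union_inter_distrib_right _ _ _).symm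

def sep (x y : Cube n) : Finset (Fin n) := (x.pos ∩ y.neg) ∪ (x.neg ∩ y.pos)

lemma sep_subset_supp (x y : Cube n) : x.sep y ⊆ x.supp :=
  Finset.union_subset_union Finset.inter_subset_left Finset.inter_subset_left

lemma isGLB_pair {x y m : Cube n} (hp : m.pos = x.pos ∪ y.pos) (hn : m.neg = x.neg ∪ y.neg) :
    IsGLB {x, y} m := by
  refine isGLB_iff_le_iff.2 fun z => ?_
  simp only [lowerBounds_insert, lowerBounds_singleton, Set.mem_inter_iff, Set.mem_Iic,
    le_iff_subset, hp, hn, Finset.union_subset_iff]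
  tauto

lemma isGLB_comp_opp (x y : Cube n) : IsGLB {x, delta (x ⊔ y) y} (x.comp y.opp) :=
  isGLB_pair (by ext i; grind [delta, supp, comp_pos, opp_pos, sup_pos, sup_neg])
    (by ext i; grind [delta, supp, comp_neg, opp_neg, sup_pos, sup_neg])

lemma comp_sup_opp_comp (x y : Cube n) :
    y.comp x ⊔ y.opp.comp x = x.restrict (x.supp \ y.supp) := by
  ext i <;> grind [supp, comp_pos, comp_neg, opp_pos, opp_neg, sup_pos, sup_neg, restrict_pos,
    restrict_neg, notMem_neg_of_mem_pos]

lemma supp_comp_sup_opp (x y : Cube n) : (x.comp y ⊔ y.opp).supp = x.sep y := by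
  ext i; grind [supp, sep, comp_pos, comp_neg, opp_pos, opp_neg, sup_pos, sup_neg,
    notMem_neg_of_mem_pos]

lemma eq_opp_restrict_sep_comp {x α : Cube n} (h : x.supp ⊆ α.supp) :
    x = (α.restrict (x.sep α)).opp.comp (α.restrict x.supp) := by
  ext i <;> grind [supp, sep, comp_pos, comp_neg, opp_pos, opp_neg, restrict_pos, restrict_neg,
    notMem_neg_of_mem_pos]

def supports (A : Set (Cube n)) : Set (Finset (Fin n)) := supp '' A

lemma supp_mem_supports {A : Set (Cube n)} {x : Cube n} (hx : x ∈ A) : x.supp ∈ supports A :=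
  ⟨x, hx, rfl⟩

section IsMRSub

variable {A : Set (Cube n)} {x y α : Cube n} (hA : IsMRSub A)
include hA

lemma comp_opp_mem (hx : x ∈ A) (hy : y ∈ A) : x.comp y.opp ∈ A := by
  obtain ⟨m, hm, hglb⟩ := hA.2.2.2 x hx y hy
  rwa [hglb.unique (isGLB_comp_opp x y)] at hm

lemma opp_mem (hx : x ∈ A) : x.opp ∈ A := by
  simpa using comp_opp_mem hA hA.1 hx

lemma comp_mem (hx : x ∈ A) (hy : y ∈ A) : x.comp y ∈ A := by
  simpa using comp_opp_mem hA hx (opp_mem hA hy)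

lemma restrict_sdiff_supp_mem (hx : x ∈ A) (hy : y ∈ A) : x.restrict (x.supp \ y.supp) ∈ A := by
  rw [← comp_sup_opp_comp]
  exact hA.2.1 _ (comp_mem hA hy hx) _ (comp_mem hA (opp_mem hA hy) hx)

lemma restrict_supp_mem (hx : x ∈ A) (hy : y ∈ A) : x.restrict y.supp ∈ A := by
  convert restrict_sdiff_supp_mem hA hx (restrict_sdiff_supp_mem hA hx hy) using 1
  ext i <;> grind [supp, restrict_pos, restrict_neg, notMem_neg_of_mem_pos]

lemma sdiff_mem_supports {K L : Finset (Fin n)} (hK : K ∈ supports A) (hL : L ∈ supports A) :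
    K \ L ∈ supports A := by
  obtain ⟨x, hx, rfl⟩ := hK
  obtain ⟨y, hy, rfl⟩ := hL
  refine ⟨_, restrict_sdiff_supp_mem hA hx hy, ?_⟩
  rw [supp_restrict, Finset.inter_eq_right.2 Finset.sdiff_subset]

lemma sep_mem_supports (hx : x ∈ A) (hα : α ∈ A) : x.sep α ∈ supports A :=
  ⟨_, hA.2.1 _ (comp_mem hA hx hα) _ (opp_mem hA hα), supp_comp_sup_opp x α⟩

lemma mem_of_supp_mem_supports (hα : α ∈ A) (hxα : x.supp ⊆ α.supp)
    (hsupp : x.supp ∈ supports A) (hsep : x.sep α ∈ supports A) : x ∈ A := by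
  obtain ⟨y, hy, hyx⟩ := hsupp
  obtain ⟨z, hz, hzx⟩ := hsep
  rw [eq_opp_restrict_sep_comp hxα, ← hyx, ← hzx]
  exact comp_mem hA (opp_mem hA (restrict_supp_mem hA hα hz)) (restrict_supp_mem hA hα hy)

lemma supp_subset_of_minimal (hα : α ∈ A ∧ ∀ b ∈ A, b ≤ α → b = α) (hx : x ∈ A) :
    x.supp ⊆ α.supp := by
  have h := congrArg supp (hα.2 _ (comp_opp_mem hA hα.1 hx) (comp_le α x.opp))
  rw [supp_comp, supp_opp] at h
  exact Finset.union_eq_left.1 h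

end IsMRSub

lemma supp_subset_of_supports_subset {A₁ A₂ : Set (Cube n)} {α₁ α₂ : Cube n} (hA₂ : IsMRSub A₂)
    (hα₁ : α₁ ∈ A₁) (hα₂ : α₂ ∈ A₂ ∧ ∀ b ∈ A₂, b ≤ α₂ → b = α₂)
    (hS : supports A₁ ⊆ supports A₂) : α₁.supp ⊆ α₂.supp := by
  obtain ⟨y, hy, hyα⟩ := hS (supp_mem_supports hα₁)
  exact hyα ▸ supp_subset_of_minimal hA₂ hα₂ hy

theorem subset_iff_supports_subset {A₁ A₂ : Set (Cube n)} {α₁ α₂ : Cube n}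
    (hA₁ : IsMRSub A₁) (hA₂ : IsMRSub A₂)
    (hα₁ : α₁ ∈ A₁ ∧ ∀ b ∈ A₁, b ≤ α₁ → b = α₁) (hα₂ : α₂ ∈ A₂ ∧ ∀ b ∈ A₂, b ≤ α₂ → b = α₂) :
    A₁ ⊆ A₂ ↔ supports A₁ ⊆ supports A₂ ∧ α₁.supp \ α₁.sep α₂ ∈ supports A₂ := by
  constructor
  · intro h
    exact ⟨Set.image_mono h, sdiff_mem_supports hA₂ (supp_mem_supports (h hα₁.1))
      (sep_mem_supports hA₂ (h hα₁.1) hα₂.1)⟩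
  · rintro ⟨hS, hK⟩
    have hsep : α₁.sep α₂ ∈ supports A₂ := by
      rw [← Finset.sdiff_sdiff_eq_self (sep_subset_supp α₁ α₂)]
      exact sdiff_mem_supports hA₂ (hS (supp_mem_supports hα₁.1)) hK
    have hα₁₂ : α₁ ∈ A₂ := mem_of_supp_mem_supports hA₂ hα₂.1
      (supp_subset_of_supports_subset hA₂ hα₁.1 hα₂ hS) (hS (supp_mem_supports hα₁.1)) hsep
    intro x hx
    exact mem_of_supp_mem_supports hA₂ hα₁₂ (supp_subset_of_minimal hA₁ hα₁ hx)
      (hS (supp_mem_supports hx)) (hS (sep_mem_supports hA₁ hx hα₁.1))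

section Betav

variable {v : Cube n} (hv : v.pos ∪ v.neg = Finset.univ)

lemma le_betav (x : Cube n) : v ≤ betav v x :=
  ⟨Finset.inter_subset_right, Finset.inter_subset_right⟩

lemma betav_congr {x y : Cube n} (h : x.supp = y.supp) : betav v x = betav v y := by
  simp only [betav, show x.pos ∪ x.neg = y.pos ∪ y.neg from h]

lemma betav_of_le {b : Cube n} (h : v ≤ b) : betav v b = b := by
  obtain ⟨hp, hn⟩ := h
  ext i <;> grind [betav, notMem_neg_of_mem_pos]

lemma le_bsum (x c d : Cube n) : x ≤ bsum x c d :=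
  ⟨Finset.sdiff_subset, Finset.sdiff_subset⟩

include hv

lemma supp_betav (x : Cube n) : (betav v x).supp = x.supp := by
  ext i
  have hi : i ∈ v.pos ∪ v.neg := hv ▸ Finset.mem_univ i
  grind [supp, betav]

lemma image_betav_subset_iff {A₁ A₂ : Set (Cube n)} :
    betav v '' A₁ ⊆ betav v '' A₂ ↔ supports A₁ ⊆ supports A₂ := by
  constructor
  · rintro h _ ⟨x, hx, rfl⟩
    obtain ⟨y, hy, hyx⟩ := h ⟨x, hx, rfl⟩
    exact ⟨y, hy, by simpa only [supp_betav hv] using congrArg supp hyx⟩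
  · rintro h _ ⟨x, hx, rfl⟩
    obtain ⟨y, hy, hyx⟩ := h (supp_mem_supports hx)
    exact ⟨y, hy, betav_congr hyx⟩

lemma mem_image_betav_iff {A : Set (Cube n)} {b : Cube n} (hb : v ≤ b) :
    b ∈ betav v '' A ↔ b.supp ∈ supports A := by
  constructor
  · rintro ⟨x, hx, rfl⟩
    exact ⟨x, hx, (supp_betav hv x).symm⟩
  · rintro ⟨x, hx, hxb⟩
    exact ⟨x, hx, (betav_congr hxb).trans (betav_of_le hb)⟩

lemma eq_betav_of_isLeast {A : Set (Cube n)} {α a : Cube n} (hA : IsMRSub A)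
    (hα : α ∈ A ∧ ∀ b ∈ A, b ≤ α → b = α) (ha : IsLeast (betav v '' A) a) : a = betav v α := by
  obtain ⟨⟨x, hx, rfl⟩, hle⟩ := ha
  refine betav_congr (subset_antisymm (supp_subset_of_minimal hA hα hx) ?_)
  simpa only [supp_betav hv] using supp_subset_of_le (hle ⟨α, hα.1, rfl⟩)

lemma supp_bsum_betav {α₁ α₂ : Cube n} (h : α₁.supp ⊆ α₂.supp) :
    (bsum (betav v α₁) (v ⊔ α₁) (v ⊔ α₂)).supp = α₁.supp \ α₁.sep α₂ := by
  ext i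
  have hi : i ∈ v.pos ∪ v.neg := hv ▸ Finset.mem_univ i
  have hi₁₂ := @h i
  simp only [supp, bsum, betav, sep, sup_pos, sup_neg, Finset.mem_union, Finset.mem_inter,
    Finset.mem_sdiff, Finset.mem_symmDiff] at hi hi₁₂ ⊢
  grind [notMem_neg_of_mem_pos]

lemma bsum_betav_mem_image_iff {A : Set (Cube n)} {α₁ α₂ : Cube n} (h : α₁.supp ⊆ α₂.supp) :
    bsum (betav v α₁) (v ⊔ α₁) (v ⊔ α₂) ∈ betav v '' A ↔ α₁.supp \ α₁.sep α₂ ∈ supports A := by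
  rw [mem_image_betav_iff hv ((le_betav α₁).trans (le_bsum _ _ _)), supp_bsum_betav hv h]

end Betav

end Cube

theorem locator_le_iff_general (n : ℕ) (v : Cube n) (hv : v.pos ∪ v.neg = Finset.univ)
    (A₁ A₂ : Set (Cube n)) (hA₁ : Cube.IsMRSub A₁) (hA₂ : Cube.IsMRSub A₂)
    (α₁ α₂ : Cube n)
    (hα₁ : α₁ ∈ A₁ ∧ ∀ b ∈ A₁, b ≤ α₁ → b = α₁)
    (hα₂ : α₂ ∈ A₂ ∧ ∀ b ∈ A₂, b ≤ α₂ → b = α₂)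
    (a₁ : Cube n)
    (ha₁ : a₁ ∈ Cube.betav v '' A₁ ∧ ∀ b ∈ Cube.betav v '' A₁, a₁ ≤ b) :
    A₁ ⊆ A₂ ↔
      (Cube.betav v '' A₁ ⊆ Cube.betav v '' A₂ ∧
        Cube.bsum a₁ (v ⊔ α₁) (v ⊔ α₂) ∈ Cube.betav v '' A₂) := by
  rw [Cube.subset_iff_supports_subset hA₁ hA₂ hα₁ hα₂, Cube.image_betav_subset_iff hv,
    Cube.eq_betav_of_isLeast hv hA₁ hα₁ ha₁]
  refine and_congr_right fun hS => ?_
  rw [Cube.bsum_betav_mem_image_iff hv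
    (Cube.supp_subset_of_supports_subset hA₂ hα₁.1 hα₂ hS)]

/-- Locator pairs detect inclusion of MR-subalgebras:
`A₁ ⊆ A₂ iff B₁ ⊆ B₂ and c₁ +_{a₁} c₂ ∈ B₂`. -/
theorem locator_le_iff (n : ℕ) (v : Cube n) (hv : v.pos ∪ v.neg = Finset.univ)
    (A₁ A₂ : Set (Cube n)) (hA₁ : Cube.IsMRSub A₁) (hA₂ : Cube.IsMRSub A₂)
    (α₁ α₂ : Cube n)
    (hα₁ : α₁ ∈ A₁ ∧ ∀ b ∈ A₁, b ≤ α₁ → b = α₁)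
    (hα₂ : α₂ ∈ A₂ ∧ ∀ b ∈ A₂, b ≤ α₂ → b = α₂)
    (a₁ a₂ : Cube n)
    (ha₁ : a₁ ∈ Cube.betav v '' A₁ ∧ ∀ b ∈ Cube.betav v '' A₁, a₁ ≤ b)
    (ha₂ : a₂ ∈ Cube.betav v '' A₂ ∧ ∀ b ∈ Cube.betav v '' A₂, a₂ ≤ b) :
    A₁ ⊆ A₂ ↔
      (Cube.betav v '' A₁ ⊆ Cube.betav v '' A₂ ∧
        Cube.bsum a₁ (v ⊔ α₁) (v ⊔ α₂) ∈ Cube.betav v '' A₂) :=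
  locator_le_iff_general n v hv A₁ A₂ hA₁ hA₂ α₁ α₂ hα₁ hα₂ a₁ ha₁
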